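/- arXiv:2502.19572 — 2 statements merged into one kernel-verified Lean document; each statement's English description precedes it below -/
import Mathlib

section
/- Let γ ≥ 0 and λ > 0, and set Γ_t(λ) := Q_t(λ)^{−1/2} e^{−tλ} where Q_t(λ) = (1/2)λ^{−(1+2γ)}(1 − e^{−2tλ}). Then there exists a constant c > 0, independent of λ and t, such that Γ_t(λ) ≤ c · t^{−(1/2 + γ)} for all t > 0 and all λ > 0. -/
open Real

/-!
Write `a = 1 + 2γ` and `x = tλ`. Since `e^{-tλ} = (e^{2tλ})^{-1/2}`, the quantity to bound is
`(λ^{-a} (e^{2x} - 1) / 2)^{-1/2}`, and `t^{-(1/2+γ)} = (t^a)^{-1/2}`; as `u ↦ u^{-1/2}` is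
antitone, the claim reduces to `x^a ≤ K (e^{2x} - 1)` for a constant `K`. With `n = ⌈a⌉₊`,
`e^y - 1` dominates both `y` and `y^n / n!`, while `y^a ≤ y` for `y ≤ 1` and `y^a ≤ y^n`
for `y ≥ 1`; so `K = n!` works when `a ≥ 1`.
-/

open Nat in
lemma pow_div_factorial_le_exp_sub_one {n : ℕ} (hn : n ≠ 0) {y : ℝ} (hy : 0 ≤ y) :
    y ^ n / n ! ≤ exp y - 1 := by
  have hsum := sum_le_exp_of_nonneg hy (n + 1)
  rw [Finset.sum_range_succ] at hsum
  have hconst : 1 ≤ ∑ i ∈ Finset.range n, y ^ i / i ! := by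
    simpa using Finset.single_le_sum (f := fun i => y ^ i / (i ! : ℝ))
      (fun i _ => by positivity) (Finset.mem_range.2 (Nat.pos_of_ne_zero hn))
  linarith

open Nat in
lemma rpow_le_factorial_ceil_mul_exp_sub_one {a : ℝ} (ha : 1 ≤ a) {y : ℝ} (hy : 0 ≤ y) :
    y ^ a ≤ ⌈a⌉₊ ! * (exp y - 1) := by
  set n := ⌈a⌉₊
  have han : a ≤ n := Nat.le_ceil a
  have hfact : (1 : ℝ) ≤ n ! := mod_cast n.factorial_pos
  have hy_le : y ≤ exp y - 1 := by linarith [add_one_le_exp y]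
  rcases le_total y 1 with hy1 | hy1
  · calc y ^ a ≤ y ^ (1 : ℝ) := rpow_le_rpow_of_exponent_ge' hy hy1 zero_le_one ha
      _ = y := rpow_one y
      _ ≤ exp y - 1 := hy_le
      _ ≤ n ! * (exp y - 1) := le_mul_of_one_le_left (hy.trans hy_le) hfact
  · have hn : n ≠ 0 := by positivity
    calc y ^ a ≤ y ^ (n : ℝ) := rpow_le_rpow_of_exponent_le hy1 han
      _ = y ^ n := rpow_natCast y n
      _ ≤ n ! * (exp y - 1) := by
        rw [← div_le_iff₀' (by positivity)]
        exact pow_div_factorial_le_exp_sub_one hn hy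

open Nat in
lemma rpow_div_two_mul_factorial_ceil_le {a : ℝ} (ha : 1 ≤ a) {t lam : ℝ} (ht : 0 < t)
    (hlam : 0 < lam) :
    t ^ a / (2 * ⌈a⌉₊ !) ≤ lam ^ (-a) * (exp (2 * (t * lam)) - 1) / 2 := by
  set K : ℝ := (⌈a⌉₊ ! : ℝ)
  have hK : 0 < K := by positivity
  have hx : 0 < t * lam := mul_pos ht hlam
  have hbound : (t * lam) ^ a ≤ K * (exp (2 * (t * lam)) - 1) :=
    (rpow_le_rpow hx.le (by linarith) (by linarith)).trans
      (rpow_le_factorial_ceil_mul_exp_sub_one ha (by positivity))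
  calc t ^ a / (2 * K) = (t * lam) ^ a * lam ^ (-a) / (2 * K) := by
        rw [mul_rpow ht.le hlam.le, rpow_neg hlam.le]
        field_simp
    _ ≤ K * (exp (2 * (t * lam)) - 1) * lam ^ (-a) / (2 * K) := by gcongr
    _ = lam ^ (-a) * (exp (2 * (t * lam)) - 1) / 2 := by field_simp

lemma rpow_neg_half_mul_exp_neg {q : ℝ} (hq : 0 ≤ q) (x : ℝ) :
    q ^ (-(1 : ℝ) / 2) * exp (-x) = (q * exp (2 * x)) ^ (-(1 : ℝ) / 2) := by
  rw [mul_rpow hq (exp_pos _).le, ← exp_mul]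
  ring_nf

/-- uniform bound Γ_t(λ) = Q_t(λ)^{−1/2} e^{−tλ} ≤ c t^{−(1/2+γ)}
with Q_t(λ) = (1/2)λ^{−(1+2γ)}(1 − e^{−2tλ}). -/
theorem heat_gamma_bound
    (γ : ℝ) (hγ : 0 ≤ γ) :
    ∃ c > (0:ℝ), ∀ t > (0:ℝ), ∀ lam > (0:ℝ),
      ((1/2) * lam ^ (-(1 + 2 * γ)) * (1 - Real.exp (-2 * t * lam))) ^ (-(1:ℝ)/2) *
        Real.exp (-t * lam) ≤ c * t ^ (-(1/2 + γ)) := by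
  set a := 1 + 2 * γ with ha
  set K : ℝ := (⌈a⌉₊.factorial : ℝ)
  refine ⟨(2 * K) ^ (1 / 2 : ℝ), by positivity, fun t ht lam hlam => ?_⟩
  have hdecay : exp (-2 * t * lam) ≤ 1 := exp_le_one_iff.2 (by nlinarith)
  have hlhs : (1 / 2 * lam ^ (-a) * (1 - exp (-2 * t * lam))) ^ (-(1:ℝ) / 2) * exp (-t * lam)
      = (lam ^ (-a) * (exp (2 * (t * lam)) - 1) / 2) ^ (-(1:ℝ) / 2) := by
    rw [neg_mul t lam, rpow_neg_half_mul_exp_neg (by positivity [sub_nonneg.2 hdecay])]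
    congr 1
    rw [show exp (-2 * t * lam) = (exp (2 * (t * lam)))⁻¹ by rw [← exp_neg]; ring_nf]
    field_simp
  have hrhs : (2 * K) ^ (1 / 2 : ℝ) * t ^ (-(1 / 2 + γ)) = (t ^ a / (2 * K)) ^ (-(1:ℝ) / 2) := by
    rw [div_rpow (by positivity) (by positivity), ← rpow_mul ht.le, neg_div,
      rpow_neg (x := 2 * K) (by positivity), div_inv_eq_mul, mul_comm, ha]
    ring_nf
  rw [hlhs, hrhs]
  exact rpow_le_rpow_of_nonpos (by positivity)
    (rpow_div_two_mul_factorial_ceil_le (by linarith) ht hlam) (by norm_num)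
end

section
/- Let γ ≥ 0, α ∈ (0,1), δ > 0 with δ > 1/(2γ + α), c > 0, and μ_n = c n^δ. Then there exists η ∈ (0,1) such that for every t > 0: ∫₀ᵗ s^{−η} Σ_{n=1}^∞ μ_n^{−2γ} e^{−ρ μ_n^{α} s} ds < ∞ for any fixed ρ > 0. -/
/-!
Each mode is killed by the exponential only at rate `μₙ^α s`, but `e^{-x} ≤ x^{-θ}` for any
`θ ∈ [0, 1]` trades part of it for decay in `n`: the `n`-th term is at most
`(ρ s)^{-θ} μₙ^{-(2γ + θα)}`. Since `δ (2γ + α) > 1`, some `θ < 1` still has `δ (2γ + θα) > 1`,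
so the series is bounded by a constant times `s^{-θ}`, and `η = (1 - θ)/2` keeps the weighted
integrand below a multiple of `s^{-(1 + θ)/2}`, which is integrable at `0`.
-/

open Real MeasureTheory Filter Topology Set

lemma Real.exp_neg_le_rpow_neg {θ x : ℝ} (hθ0 : 0 ≤ θ) (hθ1 : θ ≤ 1) (hx : 0 < x) :
    exp (-x) ≤ x ^ (-θ) :=
  calc exp (-x) ≤ (1 + x)⁻¹ := by
        rw [exp_neg]
        exact inv_anti₀ (by linarith) (by linarith [add_one_le_exp x])
    _ = (1 + x) ^ (-(1 : ℝ)) := (rpow_neg_one _).symm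
    _ ≤ (1 + x) ^ (-θ) := rpow_le_rpow_of_exponent_le (by linarith) (by linarith)
    _ ≤ x ^ (-θ) := rpow_le_rpow_of_nonpos hx (by linarith) (by linarith)

lemma exists_mem_Ioo_one_lt_mul_add {δ a b : ℝ} (h : 1 < δ * (a + b)) :
    ∃ θ ∈ Ioo (0 : ℝ) 1, 1 < δ * (a + θ * b) := by
  have hcont : Tendsto (fun θ : ℝ => δ * (a + θ * b)) (𝓝[<] 1) (𝓝 (δ * (a + 1 * b))) :=
    tendsto_nhdsWithin_of_tendsto_nhds (by fun_prop : Continuous _).continuousAt.tendsto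
  rw [one_mul] at hcont
  exact (Eventually.and (Ioo_mem_nhdsLT one_pos) (hcont.eventually (lt_mem_nhds h))).exists

lemma summable_mul_add_one_rpow_rpow_neg {c δ q : ℝ} (hc : 0 < c) (h : 1 < δ * q) :
    Summable fun n : ℕ => (c * ((n : ℝ) + 1) ^ δ) ^ (-q) := by
  have hshift : Summable fun n : ℕ => ((n + 1 : ℕ) : ℝ) ^ (-(δ * q)) :=
    (summable_nat_add_iff 1).2 (summable_nat_rpow.2 (by linarith))
  refine (hshift.mul_left (c ^ (-q))).congr fun n => ?_
  have hn : (0 : ℝ) < n + 1 := by positivity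
  rw [mul_rpow hc.le (rpow_nonneg hn.le δ), ← rpow_mul hn.le]
  push_cast
  ring_nf

lemma aestronglyMeasurable_tsum_of_summable {X : Type*} [MeasurableSpace X] {ν : Measure X}
    {S : Set X} {f : ℕ → X → ℝ} (hS : MeasurableSet S)
    (hf : ∀ n, AEStronglyMeasurable (f n) (ν.restrict S))
    (hsum : ∀ x ∈ S, Summable fun n => f n x) :
    AEStronglyMeasurable (fun x => ∑' n, f n x) (ν.restrict S) :=
  aestronglyMeasurable_of_tendsto_ae atTop
    (fun _ => Finset.aestronglyMeasurable_fun_sum _ fun n _ => hf n)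
    ((ae_restrict_iff' hS).2 (ae_of_all _ fun x hx => (hsum x hx).hasSum.tendsto_sum_nat))

lemma integrableOn_Ioc_of_norm_le_rpow {E : Type*} [NormedAddCommGroup E] {f : ℝ → E}
    {C β t : ℝ} (hβ : β < 1) (hf : AEStronglyMeasurable f (volume.restrict (Ioc 0 t)))
    (hle : ∀ s ∈ Ioc 0 t, ‖f s‖ ≤ C * s ^ (-β)) : IntegrableOn f (Ioc 0 t) :=
  Integrable.mono' ((intervalIntegral.intervalIntegrable_rpow' (by linarith)).1.const_mul C) hf
    (ae_restrict_of_forall_mem measurableSet_Ioc hle)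

section ExponentialModes

variable {μ : ℕ → ℝ} {m p α ρ θ s : ℝ}

lemma rpow_neg_mul_exp_le (hm : 0 < m) (hρ : 0 < ρ) (hs : 0 < s) (hθ0 : 0 ≤ θ) (hθ1 : θ ≤ 1) :
    m ^ (-p) * exp (-ρ * m ^ α * s) ≤ ρ ^ (-θ) * s ^ (-θ) * m ^ (-(p + θ * α)) := by
  have hmα : 0 < m ^ α := rpow_pos_of_pos hm α
  calc m ^ (-p) * exp (-ρ * m ^ α * s)
      ≤ m ^ (-p) * (ρ * m ^ α * s) ^ (-θ) := by
        rw [show -ρ * m ^ α * s = -(ρ * m ^ α * s) by ring]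
        gcongr
        exact exp_neg_le_rpow_neg hθ0 hθ1 (by positivity)
    _ = ρ ^ (-θ) * s ^ (-θ) * (m ^ (-p) * (m ^ α) ^ (-θ)) := by
        rw [mul_rpow (by positivity) hs.le, mul_rpow hρ.le hmα.le]
        ring
    _ = ρ ^ (-θ) * s ^ (-θ) * m ^ (-(p + θ * α)) := by
        rw [← rpow_mul hm.le, ← rpow_add hm]
        ring_nf

variable (hμ : ∀ n, 0 < μ n) (hρ : 0 < ρ) (hs : 0 < s) (hθ0 : 0 ≤ θ) (hθ1 : θ ≤ 1)
  (hsum : Summable fun n => μ n ^ (-(p + θ * α)))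
include hμ hρ hs hθ0 hθ1 hsum

lemma summable_rpow_neg_mul_exp : Summable fun n => μ n ^ (-p) * exp (-ρ * μ n ^ α * s) :=
  (hsum.mul_left _).of_nonneg_of_le (fun n => by have := hμ n; positivity)
    fun n => rpow_neg_mul_exp_le (hμ n) hρ hs hθ0 hθ1

lemma tsum_rpow_neg_mul_exp_le :
    ∑' n, μ n ^ (-p) * exp (-ρ * μ n ^ α * s)
      ≤ ρ ^ (-θ) * (∑' n, μ n ^ (-(p + θ * α))) * s ^ (-θ) := by
  calc ∑' n, μ n ^ (-p) * exp (-ρ * μ n ^ α * s)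
      ≤ ∑' n, ρ ^ (-θ) * s ^ (-θ) * μ n ^ (-(p + θ * α)) :=
        (summable_rpow_neg_mul_exp hμ hρ hs hθ0 hθ1 hsum).tsum_le_tsum
          (fun n => rpow_neg_mul_exp_le (hμ n) hρ hs hθ0 hθ1) (hsum.mul_left _)
    _ = ρ ^ (-θ) * (∑' n, μ n ^ (-(p + θ * α))) * s ^ (-θ) := by
        rw [tsum_mul_left]
        ring

end ExponentialModes

theorem damped_trace_condition_general
    (γ α δ c ρ : ℝ) (hγ : 0 ≤ γ) (hα : α ∈ Set.Ioo (0:ℝ) 1)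
    (hδ' : δ > 1 / (2 * γ + α)) (hc : 0 < c) (hρ : 0 < ρ) :
    ∃ η ∈ Set.Ioo (0:ℝ) 1, ∀ t > (0:ℝ),
      IntegrableOn
        (fun s : ℝ => s ^ (-η) *
          ∑' n : ℕ, (c * ((n : ℝ) + 1) ^ δ) ^ (-(2 * γ)) *
            Real.exp (-ρ * (c * ((n : ℝ) + 1) ^ δ) ^ α * s))
        (Set.Ioc 0 t) := by
  have hcrit : 1 < δ * (2 * γ + α) := by
    rwa [gt_iff_lt, div_lt_iff₀ (by linarith [hα.1])] at hδ'
  obtain ⟨θ, ⟨hθ0, hθ1⟩, hθ⟩ := exists_mem_Ioo_one_lt_mul_add hcrit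
  refine ⟨(1 - θ) / 2, ⟨by linarith, by linarith⟩, fun t _ => ?_⟩
  set μ : ℕ → ℝ := fun n => c * ((n : ℝ) + 1) ^ δ
  have hμ (n : ℕ) : 0 < μ n := by positivity
  have hsum := summable_mul_add_one_rpow_rpow_neg hc hθ
  refine integrableOn_Ioc_of_norm_le_rpow (C := ρ ^ (-θ) * ∑' n, μ n ^ (-(2 * γ + θ * α)))
    (β := (1 + θ) / 2) (by linarith) ?_ fun s hs => ?_
  · exact (measurable_id.pow_const _).aestronglyMeasurable.mul
      (aestronglyMeasurable_tsum_of_summable measurableSet_Ioc (fun _ => by fun_prop)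
        fun s hs => summable_rpow_neg_mul_exp hμ hρ hs.1 hθ0.le hθ1.le hsum)
  · have hs0 : 0 < s := hs.1
    rw [norm_of_nonneg (by positivity)]
    calc _ ≤ s ^ (-((1 - θ) / 2)) * (ρ ^ (-θ) * (∑' n, μ n ^ (-(2 * γ + θ * α))) * s ^ (-θ)) := by
          gcongr
          exact tsum_rpow_neg_mul_exp_le hμ hρ hs0 hθ0.le hθ1.le hsum
      _ = _ := by
          rw [mul_left_comm, mul_assoc, ← rpow_add hs0]
          ring_nf

/-- trace condition for the damped stochastic equation: with
μ_n = c n^δ and δ > 1/(2γ+α), there is η ∈ (0,1) such that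
s ↦ s^{−η} Σ_n μ_n^{−2γ} e^{−ρ μ_n^α s} is integrable on (0,t] for all t > 0. -/
theorem damped_trace_condition
    (γ α δ c ρ : ℝ) (hγ : 0 ≤ γ) (hα : α ∈ Set.Ioo (0:ℝ) 1)
    (hδ : 0 < δ) (hδ' : δ > 1 / (2 * γ + α)) (hc : 0 < c) (hρ : 0 < ρ) :
    ∃ η ∈ Set.Ioo (0:ℝ) 1, ∀ t > (0:ℝ),
      IntegrableOn
        (fun s : ℝ => s ^ (-η) *
          ∑' n : ℕ, (c * ((n : ℝ) + 1) ^ δ) ^ (-(2 * γ)) *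
            Real.exp (-ρ * (c * ((n : ℝ) + 1) ^ δ) ^ α * s))
        (Set.Ioc 0 t) :=
  damped_trace_condition_general γ α δ c ρ hγ hα hδ' hc hρ
end
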